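/- arXiv:2102.04320 — 2 statements merged into one kernel-verified Lean document; each statement's English description precedes it below -/
import Mathlib

section
/- For all layers l, r with 1 ≤ l ≤ r ≤ L and indices 1 ≤ i ≤ h_l, 0 ≤ j ≤ h_{l-1} (with j ranging over 1 ≤ j ≤ h_{l-1} as well as the bias index j = 0), and 1 ≤ t ≤ h_r, the partial derivative of the pre-activation function of node (r,t) with respect to the weight w_{l,i,j}, evaluated at (x; w), equals the derivative amplification coefficient from node (l,i) to node (r,t) times the partial derivative of the pre-activation function of node (l,i) with respect to w_{l,i,j}: ∂g^[r]_t/∂w_{l,i,j}(x; w) = a_{l,i→r,t} · ∂g^[l]_i/∂w_{l,i,j}(x; w). -/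
open Finset

/-- Output of node `i` of layer `l` (layer 0 is the input layer: `fnet 0 i = x i`).
`h l` is the width of layer `l`, `φ l` the activation of layer `l`,
`w (l, i, j)` the weight from node `j` of layer `l-1` to node `i` of layer `l`
(`j = 0` being the bias). -/
noncomputable def fnet (h : ℕ → ℕ) (φ : ℕ → ℝ → ℝ) (x : ℕ → ℝ)
    (w : ℕ × ℕ × ℕ → ℝ) : ℕ → ℕ → ℝ
  | 0, i => x i
  | (l + 1), i =>
      φ (l + 1) (w (l + 1, i, 0) +
        ∑ j ∈ Finset.Icc 1 (h l), w (l + 1, i, j) * fnet h φ x w l j)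

/-- Pre-activation (weighted sum) `u_{l,i} = g^[l]_i (x; w)` of node `i` of layer `l ≥ 1`. -/
noncomputable def gnet (h : ℕ → ℕ) (φ : ℕ → ℝ → ℝ) (x : ℕ → ℝ)
    (w : ℕ × ℕ × ℕ → ℝ) (l i : ℕ) : ℝ :=
  w (l, i, 0) + ∑ j ∈ Finset.Icc 1 (h (l - 1)), w (l, i, j) * fnet h φ x w (l - 1) j

/-- Derivative amplification coefficient `a_{l,i → r,t}` from node `(l,i)` to node `(r,t)`
(for `l ≤ r`): `a_{l,i → l,t} = 1` if `i = t` and `0` otherwise, and for `l < r`,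
`a_{l,i → r,t} = ∑_{j=1}^{h (r-1)} w_{r,t,j} * φ'_{r-1}(u_{r-1,j}) * a_{l,i → r-1,j}`. -/
noncomputable def dac (h : ℕ → ℕ) (φ : ℕ → ℝ → ℝ) (x : ℕ → ℝ)
    (w : ℕ × ℕ × ℕ → ℝ) (l i : ℕ) : ℕ → ℕ → ℝ
  | 0, t => if i = t then 1 else 0
  | (r + 1), t =>
      if r + 1 ≤ l then (if i = t then 1 else 0)
      else ∑ j ∈ Finset.Icc 1 (h r),
        w (r + 1, t, j) * deriv (φ r) (gnet h φ x w r j) * dac h φ x w l i r j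

/-- Partial derivative of a function `F` of the weight vector with respect to
the single weight `w_{l,i,j}`, evaluated at the weight vector `w`. -/
noncomputable def pderiv (F : (ℕ × ℕ × ℕ → ℝ) → ℝ) (w : ℕ × ℕ × ℕ → ℝ)
    (l i j : ℕ) : ℝ :=
  deriv (fun t : ℝ => F (Function.update w (l, i, j) t)) (w (l, i, j))

/-- Error coefficient `δ_{l,i} = ∑_{o=1}^m ε_o * φ'_L(u_{L,o}) * a_{l,i → L,o}`,
where `ε o` is the value `ε_o (x; w)`. -/
noncomputable def ec (h : ℕ → ℕ) (φ : ℕ → ℝ → ℝ) (x : ℕ → ℝ)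
    (w : ℕ × ℕ × ℕ → ℝ) (L m : ℕ) (ε : ℕ → ℝ) (l i : ℕ) : ℝ :=
  ∑ o ∈ Finset.Icc 1 m, ε o * deriv (φ L) (gnet h φ x w L o) * dac h φ x w l i L o

lemma fnet_succ (h : ℕ → ℕ) (φ : ℕ → ℝ → ℝ) (x : ℕ → ℝ) (w : ℕ × ℕ × ℕ → ℝ) (l i : ℕ) :
    fnet h φ x w (l+1) i = φ (l+1) (gnet h φ x w (l+1) i) := by
  simp [fnet, gnet]

lemma gnet_eq (h : ℕ → ℕ) (φ : ℕ → ℝ → ℝ) (x : ℕ → ℝ) (w : ℕ × ℕ × ℕ → ℝ) (l t : ℕ) :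
    gnet h φ x w (l+1) t = w (l+1,t,0)
      + ∑ j ∈ Finset.Icc 1 (h l), w (l+1,t,j) * fnet h φ x w l j := by
  simp [gnet]

lemma dac_self (h : ℕ → ℕ) (φ : ℕ → ℝ → ℝ) (x : ℕ → ℝ) (w : ℕ × ℕ × ℕ → ℝ) (l i t : ℕ) :
    dac h φ x w l i l t = if i = t then 1 else 0 := by
  cases l with
  | zero => simp [dac]
  | succ l' => simp [dac]

lemma fnet_update_of_lt (h : ℕ → ℕ) (φ : ℕ → ℝ → ℝ) (x : ℕ → ℝ) (w : ℕ × ℕ × ℕ → ℝ)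
    (l i j : ℕ) (s : ℝ) :
    ∀ l', l' < l → ∀ k,
      fnet h φ x (Function.update w (l,i,j) s) l' k = fnet h φ x w l' k := by
  intro l'
  induction l' with
  | zero => intro _ k; simp [fnet]
  | succ l'' ih =>
    intro hlt k
    have h1 : l'' < l := Nat.lt_of_succ_lt hlt
    have hne : ∀ j', ((l''+1 : ℕ), k, j') ≠ (l, i, j) := by
      intro j' hc
      have := congrArg Prod.fst hc
      simp at this
      omega
    simp only [fnet]
    congr 1
    rw [Function.update_of_ne (hne 0)]
    congr 1
    refine Finset.sum_congr rfl fun j' _ => ?_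
    rw [Function.update_of_ne (hne j'), ih h1 j']

lemma hasDerivAt_update' {α : Type*} [DecidableEq α] (w : α → ℝ) (p q : α) (s : ℝ) :
    HasDerivAt (fun t => Function.update w p t q) (if q = p then 1 else 0) s := by
  by_cases hq : q = p
  · subst hq
    simp only [Function.update_self, if_pos rfl]
    exact hasDerivAt_id s
  · simp only [Function.update_of_ne hq, if_neg hq]
    exact hasDerivAt_const s _

lemma gnet_hasDerivAt (h : ℕ → ℕ) (φ : ℕ → ℝ → ℝ) (x : ℕ → ℝ) (w : ℕ × ℕ × ℕ → ℝ)
    (hφ : ∀ l, Differentiable ℝ (φ l))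
    (l i j : ℕ) (hl : 1 ≤ l) (hj1 : 1 ≤ j ∨ j = 0) (hj : j ≤ h (l-1)) :
    ∀ r, l ≤ r → ∀ t,
    HasDerivAt (fun s => gnet h φ x (Function.update w (l,i,j) s) r t)
      (dac h φ x w l i r t * (if j = 0 then 1 else fnet h φ x w (l-1) j))
      (w (l,i,j)) := by
  intro r
  induction r with
  | zero => intro hr; omega
  | succ r ih =>
    intro hr t
    by_cases hlr : l = r + 1
    · -- base case
      subst hlr
      have hconst : ∀ j' s, fnet h φ x (Function.update w (r+1,i,j) s) r j'
          = fnet h φ x w r j' := fun j' s =>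
        fnet_update_of_lt h φ x w (r+1) i j s r (Nat.lt_succ_self r) j'
      have key : ∀ s, gnet h φ x (Function.update w (r+1,i,j) s) (r+1) t
          = Function.update w (r+1,i,j) s (r+1,t,0)
            + ∑ j' ∈ Finset.Icc 1 (h r),
                Function.update w (r+1,i,j) s (r+1,t,j') * fnet h φ x w r j' := by
        intro s
        rw [gnet_eq]
        congr 1
        exact Finset.sum_congr rfl fun j' _ => by rw [hconst j' s]
      have hd : HasDerivAt
          (fun s => gnet h φ x (Function.update w (r+1,i,j) s) (r+1) t)
          ((if ((r+1 : ℕ),t,(0:ℕ)) = ((r+1 : ℕ),i,j) then (1:ℝ) else 0)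
            + ∑ j' ∈ Finset.Icc 1 (h r),
                (if ((r+1 : ℕ),t,j') = ((r+1 : ℕ),i,j) then (1:ℝ) else 0)
                  * fnet h φ x w r j') (w (r+1,i,j)) := by
        have hsum : HasDerivAt (fun s => ∑ j' ∈ Finset.Icc 1 (h r),
            Function.update w ((r+1 : ℕ),i,j) s ((r+1 : ℕ),t,j') * fnet h φ x w r j')
            (∑ j' ∈ Finset.Icc 1 (h r),
              (if ((r+1 : ℕ),t,j') = ((r+1 : ℕ),i,j) then (1:ℝ) else 0) * fnet h φ x w r j')
            (w (r+1,i,j)) :=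
          HasDerivAt.fun_sum (fun j' _ =>
            (hasDerivAt_update' w ((r+1 : ℕ),i,j) ((r+1 : ℕ),t,j') (w (r+1,i,j))).mul_const
              (fnet h φ x w r j'))
        have := (hasDerivAt_update' w ((r+1 : ℕ),i,j) ((r+1 : ℕ),t,(0:ℕ)) (w (r+1,i,j))).add hsum
        exact this.congr_of_eventuallyEq (Filter.Eventually.of_forall fun s => (key s))
      convert hd using 1
      rw [dac_self]
      have hrr : ((r:ℕ)+1) - 1 = r := by omega
      by_cases hit : i = t
      · subst hit
        rcases hj1 with hj1 | hj0
        · have hji : ((r+1 : ℕ),i,(0:ℕ)) ≠ ((r+1 : ℕ),i,j) := by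
            intro hc; injection hc with h1 h2; injection h2 with h3 h4; omega
          rw [if_neg hji, if_pos rfl, if_neg (by omega : ¬ j = 0)]
          rw [Finset.sum_eq_single j]
          · simp [hrr]
          · intro b hb hbj
            rw [if_neg (by intro hc; injection hc with h1 h2; injection h2 with h3 h4; exact hbj h4), zero_mul]
          · intro hnot
            exfalso; exact hnot (Finset.mem_Icc.mpr ⟨hj1, by rw [hrr] at hj; exact hj⟩)
        · subst hj0
          rw [if_pos rfl, if_pos rfl, if_pos rfl]
          rw [Finset.sum_eq_zero, add_zero, one_mul]
          intro b hb
          rw [if_neg, zero_mul]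
          intro hc; injection hc with h1 h2; injection h2 with h3 h4
          have := Finset.mem_Icc.mp hb; omega
      · rw [if_neg hit, zero_mul]
        rw [if_neg (by intro hc; injection hc with h1 h2; injection h2 with h3 h4; exact hit h3.symm)]
        rw [Finset.sum_eq_zero, add_zero]
        intro b hb
        rw [if_neg (by intro hc; injection hc with h1 h2; injection h2 with h3 h4; exact hit h3.symm), zero_mul]
    · -- inductive step: l ≤ r
      have hlr' : l ≤ r := by omega
      have hr1 : 1 ≤ r := le_trans hl hlr'
      have hne : ∀ j', ((r+1 : ℕ), t, j') ≠ (l, i, j) := by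
        intro j' hc
        have := congrArg Prod.fst hc
        simp at this; omega
      obtain ⟨r', rfl⟩ : ∃ r', r = r' + 1 := ⟨r - 1, by omega⟩
      have key : ∀ s, gnet h φ x (Function.update w (l,i,j) s) (r'+1+1) t
          = w (r'+1+1,t,0) + ∑ j' ∈ Finset.Icc 1 (h (r'+1)),
              w (r'+1+1,t,j') * φ (r'+1) (gnet h φ x (Function.update w (l,i,j) s) (r'+1) j') := by
        intro s
        rw [gnet_eq, Function.update_of_ne (hne 0)]
        congr 1
        refine Finset.sum_congr rfl fun j' _ => ?_
        rw [Function.update_of_ne (hne j'), fnet_succ]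
      have hd : HasDerivAt
          (fun s => gnet h φ x (Function.update w (l,i,j) s) (r'+1+1) t)
          (∑ j' ∈ Finset.Icc 1 (h (r'+1)),
            w (r'+1+1,t,j') * (deriv (φ (r'+1)) (gnet h φ x w (r'+1) j')
              * (dac h φ x w l i (r'+1) j'
                  * (if j = 0 then 1 else fnet h φ x w (l-1) j)))) (w (l,i,j)) := by
        have hsum : HasDerivAt (fun s => ∑ j' ∈ Finset.Icc 1 (h (r'+1)),
            w (r'+1+1,t,j') * φ (r'+1) (gnet h φ x (Function.update w (l,i,j) s) (r'+1) j'))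
            _ (w (l,i,j)) := HasDerivAt.fun_sum (fun j' _ => by
          have hG := ih hlr' j'
          have hφd := (hφ (r'+1)).differentiableAt (x := gnet h φ x (Function.update w (l,i,j) (w (l,i,j))) (r'+1) j')
          have hcomp := (hφd.hasDerivAt).comp (w (l,i,j)) hG
          have := hcomp.const_mul (w (r'+1+1,t,j'))
          simpa [Function.update_eq_self, mul_assoc] using this)
        have h2 := ((hasDerivAt_const (w (l,i,j)) (w (r'+1+1,t,0))).add hsum).congr_of_eventuallyEq
          (Filter.Eventually.of_forall fun s => (key s))
        simpa using h2
      convert hd using 1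
      have : ¬ (r'+1+1 ≤ l) := by omega
      simp only [dac, if_neg this, Finset.sum_mul]
      exact Finset.sum_congr rfl fun j' _ => by ring

/-- Theorem 1: for `1 ≤ l ≤ r ≤ L`, `1 ≤ i ≤ h l`, `0 ≤ j ≤ h (l-1)`, `1 ≤ t ≤ h r`,
the partial derivative of the pre-activation of node `(r,t)` w.r.t. the weight `w_{l,i,j}`
equals the derivative amplification coefficient from `(l,i)` to `(r,t)` times the partial
derivative of the pre-activation of node `(l,i)` w.r.t. `w_{l,i,j}`. -/
theorem dac_mul_pderiv_gnet
    (L n m : ℕ) (h : ℕ → ℕ) (hn : h 0 = n) (hm : h L = m)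
    (φ : ℕ → ℝ → ℝ) (hφ : ∀ l, Differentiable ℝ (φ l))
    (x : ℕ → ℝ) (w : ℕ × ℕ × ℕ → ℝ)
    (l r i j t : ℕ)
    (hl : 1 ≤ l) (hlr : l ≤ r) (hrL : r ≤ L)
    (hi1 : 1 ≤ i) (hi2 : i ≤ h l)
    (hj : j ≤ h (l - 1))
    (ht1 : 1 ≤ t) (ht2 : t ≤ h r) :
    pderiv (fun w' => gnet h φ x w' r t) w l i j
      = dac h φ x w l i r t * pderiv (fun w' => gnet h φ x w' l i) w l i j := by
  have hj1 : 1 ≤ j ∨ j = 0 := by omega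
  have H := gnet_hasDerivAt h φ x w hφ l i j hl hj1 hj
  have HR := (H r hlr t).deriv
  have HL := (H l le_rfl i).deriv
  unfold pderiv
  rw [HR, HL, dac_self, if_pos rfl, one_mul]
end

section
/- For every layer l with 1 ≤ l < L and index 1 ≤ i ≤ h_l, the error coefficient of node (l,i) satisfies the backward recurrence δ_{l,i} = φ'_l(u_{l,i}) · Σ_{s=1}^{h_{l+1}} w_{l+1,s,i} δ_{l+1,s}. -/
open Finset

lemma dac_peel (h : ℕ → ℕ) (φ : ℕ → ℝ → ℝ) (x : ℕ → ℝ) (w : ℕ × ℕ × ℕ → ℝ)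
    (l i : ℕ) (hi : i ∈ Finset.Icc 1 (h l)) :
    ∀ r, l < r → ∀ t ∈ Finset.Icc 1 (h r),
      dac h φ x w l i r t
        = deriv (φ l) (gnet h φ x w l i) *
            ∑ s ∈ Finset.Icc 1 (h (l + 1)), w (l + 1, s, i) * dac h φ x w (l + 1) s r t := by
  intro r
  induction r with
  | zero => omega
  | succ r ih =>
    intro hlr t ht
    rcases eq_or_lt_of_le (Nat.succ_le_of_lt hlr) with heq | hlt
    · -- r = l
      have hrl : r = l := by omega
      subst hrl
      have h1 : ¬ (r + 1 ≤ r) := by omega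
      rw [dac, if_neg h1]
      have hL : ∑ j ∈ Finset.Icc 1 (h r),
          w (r + 1, t, j) * deriv (φ r) (gnet h φ x w r j) * dac h φ x w r i r j
          = w (r + 1, t, i) * deriv (φ r) (gnet h φ x w r i) := by
        rw [Finset.sum_eq_single_of_mem i hi]
        · rw [dac_self, if_pos rfl, mul_one]
        · intro j _ hji
          rw [dac_self, if_neg (Ne.symm hji), mul_zero]
      rw [hL]
      have hR : ∑ s ∈ Finset.Icc 1 (h (r + 1)),
          w (r + 1, s, i) * dac h φ x w (r + 1) s (r + 1) t = w (r + 1, t, i) := by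
        rw [Finset.sum_eq_single_of_mem t ht]
        · rw [dac, if_pos (le_refl _), if_pos rfl, mul_one]
        · intro s _ hst
          rw [dac, if_pos (le_refl _), if_neg hst, mul_zero]
      rw [hR]; ring
    · -- l < r
      have hlr' : l < r := by omega
      have h1 : ¬ (r + 1 ≤ l) := by omega
      have h2 : ¬ (r + 1 ≤ l + 1) := by omega
      rw [dac, if_neg h1]
      have key : ∀ j ∈ Finset.Icc 1 (h r),
          w (r + 1, t, j) * deriv (φ r) (gnet h φ x w r j) * dac h φ x w l i r j
          = deriv (φ l) (gnet h φ x w l i) *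
              ∑ s ∈ Finset.Icc 1 (h (l + 1)), w (l + 1, s, i) *
                (w (r + 1, t, j) * deriv (φ r) (gnet h φ x w r j) *
                  dac h φ x w (l + 1) s r j) := by
        intro j hj
        rw [ih hlr' j hj]
        simp only [Finset.mul_sum]
        exact Finset.sum_congr rfl fun s _ => by ring
      rw [Finset.sum_congr rfl key, ← Finset.mul_sum, Finset.sum_comm]
      congr 1
      apply Finset.sum_congr rfl
      intro s _
      rw [dac, if_neg h2, Finset.mul_sum]

/-- Theorem 5: for `1 ≤ l < L` and `1 ≤ i ≤ h l`,
`δ_{l,i} = φ'_l(u_{l,i}) * ∑_{s=1}^{h (l+1)} w_{l+1,s,i} * δ_{l+1,s}`. -/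
theorem ec_backward_recurrence
    (L n m : ℕ) (h : ℕ → ℕ) (hn : h 0 = n) (hm : h L = m)
    (φ : ℕ → ℝ → ℝ) (hφ : ∀ l, Differentiable ℝ (φ l))
    (x : ℕ → ℝ) (w : ℕ × ℕ × ℕ → ℝ) (ε : ℕ → ℝ)
    (l i : ℕ)
    (hl : 1 ≤ l) (hlL : l < L)
    (hi1 : 1 ≤ i) (hi2 : i ≤ h l) :
    ec h φ x w L m ε l i
      = deriv (φ l) (gnet h φ x w l i) *
          ∑ s ∈ Finset.Icc 1 (h (l + 1)), w (l + 1, s, i) * ec h φ x w L m ε (l + 1) s := by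
  have hi : i ∈ Finset.Icc 1 (h l) := Finset.mem_Icc.2 ⟨hi1, hi2⟩
  unfold ec
  have hpeel := dac_peel h φ x w l i hi L hlL
  calc ∑ o ∈ Finset.Icc 1 m, ε o * deriv (φ L) (gnet h φ x w L o) * dac h φ x w l i L o
      = ∑ o ∈ Finset.Icc 1 m, ∑ s ∈ Finset.Icc 1 (h (l + 1)),
          deriv (φ l) (gnet h φ x w l i) * (w (l + 1, s, i) *
            (ε o * deriv (φ L) (gnet h φ x w L o) * dac h φ x w (l + 1) s L o)) := by
        apply Finset.sum_congr rfl
        intro o ho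
        rw [hpeel o (by rwa [hm])]
        rw [Finset.mul_sum, Finset.mul_sum]
        apply Finset.sum_congr rfl
        intro s _
        ring
    _ = deriv (φ l) (gnet h φ x w l i) *
          ∑ s ∈ Finset.Icc 1 (h (l + 1)), w (l + 1, s, i) *
            ∑ o ∈ Finset.Icc 1 m, ε o * deriv (φ L) (gnet h φ x w L o) *
              dac h φ x w (l + 1) s L o := by
        rw [Finset.sum_comm, Finset.mul_sum]
        apply Finset.sum_congr rfl
        intro s _
        rw [← Finset.mul_sum, ← Finset.mul_sum]
end
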